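/- For a poset R, a family of posets (S_i)_{i∈R}, and a family of games (G_j) indexed by the modular composition R[S_i], the ordered join satisfies the associativity identity (R[S_i]) ⋈ G = R ⋈ (i ↦ S_i ⋈ G|_{S_i}), i.e., the two games have identical game trees. -/

import Mathlib

universe u

/-- Nimbers (as in the older Mathlib): a type synonym for ordinals. -/
def Nimber : Type (u + 1) := Ordinal.{u}

/-- The identity map between nimbers and ordinals. -/
def Nimber.toOrdinal : Nimber.{u} ≃ Ordinal.{u} := Equiv.refl _

namespace SetTheory

/-- Pre-games, as in the older Mathlib (removed from Mathlib since). -/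
inductive PGame : Type (u + 1)
  | mk : ∀ α β : Type u, (α → PGame) → (β → PGame) → PGame

namespace PGame

def LeftMoves : PGame.{u} → Type u
  | mk l _ _ _ => l

def RightMoves : PGame.{u} → Type u
  | mk _ r _ _ => r

def moveLeft : ∀ g : PGame.{u}, LeftMoves g → PGame.{u}
  | mk _l _ L _ => L

def moveRight : ∀ g : PGame.{u}, RightMoves g → PGame.{u}
  | mk _ _r _ R => R

instance : Zero PGame :=
  ⟨⟨PEmpty, PEmpty, PEmpty.elim, PEmpty.elim⟩⟩

/-- Two pre-games are identical if their left and right sets are identical. -/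
def Identical : PGame.{u} → PGame.{u} → Prop
  | mk _ _ xL xR, mk _ _ yL yR =>
    Relator.BiTotal (fun i j ↦ Identical (xL i) (yL j)) ∧
      Relator.BiTotal (fun i j ↦ Identical (xR i) (yR j))

infix:50 " ≡ " => PGame.Identical

/-- The Grundy value of a game: the mex of the Grundy values of its (left) options. -/
noncomputable def grundyValue : PGame.{u} → Nimber.{u}
  | mk _ _ L _ => (sInf (Set.range fun i => (grundyValue (L i) : Ordinal.{u}))ᶜ : Ordinal.{u})

end PGame

end SetTheory

open SetTheory PGame Nimber

noncomputable section
open Classical in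
/-- The state resulting from a (Left) move in component `i₀` of an ordered join:
all components strictly above `i₀` are replaced by the empty game `0`. -/
def ojNextL {S : Type} [PartialOrder S] (x : S → PGame) (i₀ : S) (j : (x i₀).LeftMoves) :
    S → PGame :=
  fun i => if i = i₀ then (x i₀).moveLeft j else if i₀ < i then 0 else x i

open Classical in
def ojNextR {S : Type} [PartialOrder S] (x : S → PGame) (i₀ : S) (j : (x i₀).RightMoves) :
    S → PGame :=
  fun i => if i = i₀ then (x i₀).moveRight j else if i₀ < i then 0 else x i

/-- The move relation of the ordered join: `OJRel y x` iff `y` results from `x` by a single move. -/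
def OJRel {S : Type} [PartialOrder S] (y x : S → PGame) : Prop :=
  (∃ i₀ j, y = ojNextL x i₀ j) ∨ (∃ i₀ j, y = ojNextR x i₀ j)

theorem ojrel_L {S : Type} [PartialOrder S] (x : S → PGame) (i₀ : S) (j : (x i₀).LeftMoves) :
    OJRel (ojNextL x i₀ j) x := Or.inl ⟨i₀, j, rfl⟩

theorem ojrel_R {S : Type} [PartialOrder S] (x : S → PGame) (i₀ : S) (j : (x i₀).RightMoves) :
    OJRel (ojNextR x i₀ j) x := Or.inr ⟨i₀, j, rfl⟩

/-- The ordered join of a family of games, as a game, given a termination certificate. -/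
def ojoinAcc {S : Type} [PartialOrder S] : ∀ x : S → PGame, Acc OJRel x → PGame := fun x h =>
  Acc.rec (motive := fun x _ => PGame)
    (fun x _ ih =>
      PGame.mk (Σ i₀ : S, (x i₀).LeftMoves) (Σ i₀ : S, (x i₀).RightMoves)
        (fun p => ih _ (ojrel_L x p.1 p.2))
        (fun p => ih _ (ojrel_R x p.1 p.2))) h

open Classical in
/-- The ordered join `S ⋈ G` of a family of games `G` over the poset `S`.
(Defined as `0` in the degenerate non-terminating case.) -/
def ojoin {S : Type} [PartialOrder S] (x : S → PGame) : PGame :=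
  if h : Acc OJRel x then ojoinAcc x h else 0

/-- The Grundy set `Γ₁(G)`: the set of Grundy numbers of the options of `G`. -/
def grundySet (G : PGame) : Set Nimber :=
  Set.range fun i => grundyValue (G.moveLeft i)
end

/-- The modular composition `R[Sᵢ]` of a poset `R` with a family of posets `(Sᵢ)`:
the disjoint union `⊔ᵢ Sᵢ`, with the inherited order inside each `Sᵢ`, and
`j₁ ≤ j₂` whenever `j₁ ∈ S_{i₁}`, `j₂ ∈ S_{i₂}` with `i₁ < i₂`. -/
def MComp (R : Type) (S : R → Type) : Type := Σ i, S i

instance MComp.instPartialOrder (R : Type) [PartialOrder R] (S : R → Type)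
    [∀ i, PartialOrder (S i)] : PartialOrder (MComp R S) where
  le a b := a.1 < b.1 ∨ ∃ h : a.1 = b.1, (h ▸ a.2 : S b.1) ≤ b.2
  le_refl a := Or.inr ⟨rfl, le_rfl⟩
  le_trans := by
    rintro ⟨i, x⟩ ⟨j, y⟩ ⟨k, z⟩ h₁ h₂
    dsimp only at h₁ h₂ ⊢
    rcases h₁ with h₁ | ⟨h, h₁⟩
    · rcases h₂ with h₂ | ⟨h, h₂⟩
      · exact Or.inl (h₁.trans h₂)
      · exact Or.inl (h ▸ h₁)
    · subst h
      rcases h₂ with h₂ | ⟨h, h₂⟩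
      · exact Or.inl h₂
      · subst h
        exact Or.inr ⟨rfl, le_trans h₁ h₂⟩
  le_antisymm := by
    rintro ⟨i, x⟩ ⟨j, y⟩ h₁ h₂
    dsimp only at h₁ h₂
    rcases h₁ with h₁ | ⟨h, h₁⟩
    · rcases h₂ with h₂ | ⟨h, h₂⟩
      · exact absurd (h₁.trans h₂) (lt_irrefl _)
      · subst h
        exact absurd h₁ (lt_irrefl _)
    · subst h
      rcases h₂ with h₂ | ⟨h, h₂⟩
      · exact absurd h₂ (lt_irrefl _)
      · exact congrArg (fun t => (⟨i, t⟩ : MComp R S)) (le_antisymm h₁ h₂)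

/-!
A move of `R[Sᵢ] ⋈ G` at `⟨i₀, j⟩` is a move of the block `Sᵢ₀ ⋈ G|_{Sᵢ₀}` at `j`, hence a move of
the outer join at `i₀`; conversely every move of the outer join at `i₀` comes from such a pair.
In both games the move zeroes exactly the same components: those of the blocks above `i₀`, and
those above `j` inside the block `i₀`. So the relation "`x i ≡ Sᵢ ⋈ y|_{Sᵢ}` for every `i`"
between an outer family `x` and an inner family `y` is preserved by corresponding moves, and
well-founded induction on the inner game gives both termination of the outer game and identity
of the two game trees.
-/

namespace SetTheory.PGame

theorem identical_iff {x y : PGame} :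
    (x ≡ y) ↔ Relator.BiTotal (fun i j => x.moveLeft i ≡ y.moveLeft j) ∧
      Relator.BiTotal (fun i j => x.moveRight i ≡ y.moveRight j) := by
  cases x; cases y; rfl

theorem Identical.refl : ∀ x : PGame, x ≡ x
  | mk _ _ L R => identical_iff.2
      ⟨⟨fun i => ⟨i, Identical.refl (L i)⟩, fun i => ⟨i, Identical.refl (L i)⟩⟩,
        ⟨fun i => ⟨i, Identical.refl (R i)⟩, fun i => ⟨i, Identical.refl (R i)⟩⟩⟩

end SetTheory.PGame

section OrderedJoin

variable {T : Type} [PartialOrder T]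

open Classical in
/-- `ojNextL x i₀ j` and `ojNextR x i₀ j` are definitionally `ojNext x i₀` applied to the chosen
option of `x i₀`, so left and right moves share the lemmas below. -/
noncomputable def ojNext (x : T → PGame) (i₀ : T) (g : PGame) : T → PGame :=
  fun i => if i = i₀ then g else if i₀ < i then 0 else x i

theorem ojNext_self (x : T → PGame) (i₀ : T) (g : PGame) : ojNext x i₀ g i₀ = g :=
  if_pos rfl

theorem ojNext_of_lt (x : T → PGame) {i₀ i : T} (g : PGame) (h : i₀ < i) :
    ojNext x i₀ g i = 0 := by
  rw [ojNext, if_neg h.ne', if_pos h]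

theorem ojNext_of_ne_of_not_lt (x : T → PGame) {i₀ i : T} (g : PGame) (hne : i ≠ i₀)
    (hlt : ¬i₀ < i) : ojNext x i₀ g i = x i := by
  rw [ojNext, if_neg hne, if_neg hlt]

theorem ojoin_eq_mk {x : T → PGame} (h : Acc OJRel x) :
    ojoin x = mk (Σ i, (x i).LeftMoves) (Σ i, (x i).RightMoves)
      (fun p => ojoin (ojNextL x p.1 p.2)) (fun p => ojoin (ojNextR x p.1 p.2)) := by
  rw [ojoin, dif_pos h]
  cases h with
  | intro x g =>
    show mk _ _ _ _ = _
    congr 1 <;> funext p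
    · exact (dif_pos (g _ (ojrel_L x p.1 p.2))).symm
    · exact (dif_pos (g _ (ojrel_R x p.1 p.2))).symm

theorem acc_ojRel_zero : Acc OJRel (fun _ : T => (0 : PGame)) :=
  ⟨_, by rintro _ (⟨_, j, _⟩ | ⟨_, j, _⟩) <;> exact j.elim⟩

theorem zero_identical_ojoin_zero : 0 ≡ ojoin (fun _ : T => (0 : PGame)) := by
  rw [ojoin_eq_mk acc_ojRel_zero]
  exact identical_iff.2 ⟨⟨fun p => p.elim, fun p => p.2.elim⟩, ⟨fun p => p.elim, fun p => p.2.elim⟩⟩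

end OrderedJoin

namespace MComp

variable {R : Type} {S : R → Type}

/-- Pins the order of `MComp R S` on a pair `⟨i, a⟩`, which would otherwise be elaborated in
`Σ i, S i` and pick up its own (different) order. -/
abbrev mk (i : R) (a : S i) : MComp R S := ⟨i, a⟩

variable [PartialOrder R] [∀ i, PartialOrder (S i)]

theorem mk_lt_mk_of_lt {i₁ i₂ : R} (h : i₁ < i₂) (a : S i₁) (b : S i₂) :
    mk i₁ a < mk i₂ b := by
  refine lt_of_le_not_ge (Or.inl h) ?_
  rintro (h' | ⟨e, _⟩)
  · exact h.not_gt h'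
  · exact h.ne' e

theorem mk_le_mk_iff {i : R} {a b : S i} : mk i a ≤ mk i b ↔ a ≤ b :=
  ⟨fun h => h.elim (fun h => (lt_irrefl i h).elim) fun ⟨_, h⟩ => h, fun h => Or.inr ⟨rfl, h⟩⟩

theorem mk_lt_mk_iff {i : R} {a b : S i} : mk i a < mk i b ↔ a < b := by
  rw [lt_iff_le_not_ge, lt_iff_le_not_ge, mk_le_mk_iff, mk_le_mk_iff]

theorem not_mk_lt_mk {i₁ i₂ : R} (hne : i₁ ≠ i₂) (hlt : ¬i₁ < i₂) (a : S i₁) (b : S i₂) :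
    ¬mk i₁ a < mk i₂ b := fun h =>
  h.le.elim hlt fun ⟨e, _⟩ => hne e

end MComp

section Associativity

variable {R : Type} [PartialOrder R] {S : R → Type} [∀ i, PartialOrder (S i)]

theorem restrict_ojNext (y : MComp R S → PGame) (i : R) (j : S i) (g : PGame) :
    (fun s : S i => ojNext y ⟨i, j⟩ g ⟨i, s⟩) = ojNext (fun s => y ⟨i, s⟩) j g := by
  funext s
  by_cases hs : s = j
  · subst hs
    exact (ojNext_self (T := MComp R S) _ _ _).trans (ojNext_self _ _ _).symm
  by_cases hlt : j < s
  · rw [ojNext_of_lt y _ (MComp.mk_lt_mk_iff.2 hlt), ojNext_of_lt _ _ hlt]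
  · rw [ojNext_of_ne_of_not_lt y _ (fun e => hs (eq_of_heq (Sigma.mk.inj e).2))
      (mt MComp.mk_lt_mk_iff.1 hlt), ojNext_of_ne_of_not_lt _ _ hs hlt]

theorem acc_restrict {y : MComp R S → PGame} (h : Acc OJRel y) (i : R) :
    Acc OJRel (fun s : S i => y ⟨i, s⟩) := by
  refine h.of_fibration (fun z s => z ⟨i, s⟩) ?_
  rintro y _ (⟨j, k, rfl⟩ | ⟨j, k, rfl⟩)
  · exact ⟨_, ojrel_L y ⟨i, j⟩ k, restrict_ojNext y i j _⟩
  · exact ⟨_, ojrel_R y ⟨i, j⟩ k, restrict_ojNext y i j _⟩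

/-- `x` is the family `i ↦ Sᵢ ⋈ y|_{Sᵢ}` up to identity of games. Equality would not survive a
move: it turns the blocks above the moved one into `0` on one side and into the ordered join of
zeros on the other. -/
def IsBlockJoin (x : R → PGame) (y : MComp R S → PGame) : Prop :=
  ∀ i, x i ≡ ojoin fun s : S i => y ⟨i, s⟩

theorem IsBlockJoin.move {x : R → PGame} {y : MComp R S → PGame} (hxy : IsBlockJoin x y)
    {i₀ : R} {j : S i₀} {g g' : PGame} (h : g ≡ ojoin (ojNext (fun s => y ⟨i₀, s⟩) j g')) :
    IsBlockJoin (ojNext x i₀ g) (ojNext y ⟨i₀, j⟩ g') := by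
  intro i
  by_cases hi : i = i₀
  · subst hi
    rwa [ojNext_self, restrict_ojNext]
  by_cases hlt : i₀ < i
  · have hzero : (fun s : S i => ojNext y ⟨i₀, j⟩ g' ⟨i, s⟩) = fun _ => 0 :=
      funext fun s => ojNext_of_lt y _ (MComp.mk_lt_mk_of_lt hlt j s)
    rw [ojNext_of_lt _ _ hlt, hzero]
    exact zero_identical_ojoin_zero
  · have hsame : (fun s : S i => ojNext y ⟨i₀, j⟩ g' ⟨i, s⟩) = fun s => y ⟨i, s⟩ :=
      funext fun s => ojNext_of_ne_of_not_lt y _ (fun e => hi (congrArg Sigma.fst e))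
        (MComp.not_mk_lt_mk (Ne.symm hi) hlt j s)
    rw [ojNext_of_ne_of_not_lt _ _ hi hlt, hsame]
    exact hxy i

theorem IsBlockJoin.leftMoves_biTotal {x : R → PGame} {y : MComp R S → PGame}
    (hxy : IsBlockJoin x y) (hy : Acc OJRel y) :
    Relator.BiTotal fun (p : Σ a, (y a).LeftMoves) (q : Σ i, (x i).LeftMoves) =>
      IsBlockJoin (ojNextL x q.1 q.2) (ojNextL y p.1 p.2) := by
  have hblock := fun i => identical_iff.1 ((ojoin_eq_mk (acc_restrict hy i)) ▸ hxy i)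
  constructor
  · rintro ⟨⟨i₀, j⟩, k⟩
    obtain ⟨m, hm⟩ := (hblock i₀).1.2 ⟨j, k⟩
    exact ⟨⟨i₀, m⟩, hxy.move hm⟩
  · rintro ⟨i₀, m⟩
    obtain ⟨⟨j, k⟩, hm⟩ := (hblock i₀).1.1 m
    exact ⟨⟨⟨i₀, j⟩, k⟩, hxy.move hm⟩

theorem IsBlockJoin.rightMoves_biTotal {x : R → PGame} {y : MComp R S → PGame}
    (hxy : IsBlockJoin x y) (hy : Acc OJRel y) :
    Relator.BiTotal fun (p : Σ a, (y a).RightMoves) (q : Σ i, (x i).RightMoves) =>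
      IsBlockJoin (ojNextR x q.1 q.2) (ojNextR y p.1 p.2) := by
  have hblock := fun i => identical_iff.1 ((ojoin_eq_mk (acc_restrict hy i)) ▸ hxy i)
  constructor
  · rintro ⟨⟨i₀, j⟩, k⟩
    obtain ⟨m, hm⟩ := (hblock i₀).2.2 ⟨j, k⟩
    exact ⟨⟨i₀, m⟩, hxy.move hm⟩
  · rintro ⟨i₀, m⟩
    obtain ⟨⟨j, k⟩, hm⟩ := (hblock i₀).2.1 m
    exact ⟨⟨⟨i₀, j⟩, k⟩, hxy.move hm⟩

theorem IsBlockJoin.acc_and_ojoin_identical {y : MComp R S → PGame} (hy : Acc OJRel y) :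
    ∀ x : R → PGame, IsBlockJoin x y → Acc OJRel x ∧ ojoin y ≡ ojoin x := by
  induction hy with
  | intro y hpred ih =>
    intro x hxy
    have hy : Acc OJRel y := ⟨y, hpred⟩
    have hL := hxy.leftMoves_biTotal hy
    have hR := hxy.rightMoves_biTotal hy
    have hx : Acc OJRel x := by
      refine ⟨x, ?_⟩
      rintro _ (⟨i₀, m, rfl⟩ | ⟨i₀, m, rfl⟩)
      · obtain ⟨p, hp⟩ := hL.2 ⟨i₀, m⟩
        exact (ih _ (ojrel_L y p.1 p.2) _ hp).1
      · obtain ⟨p, hp⟩ := hR.2 ⟨i₀, m⟩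
        exact (ih _ (ojrel_R y p.1 p.2) _ hp).1
    refine ⟨hx, ?_⟩
    rw [ojoin_eq_mk hy, ojoin_eq_mk hx, identical_iff]
    refine ⟨⟨fun p => ?_, fun q => ?_⟩, ⟨fun p => ?_, fun q => ?_⟩⟩
    · obtain ⟨q, hq⟩ := hL.1 p
      exact ⟨q, (ih _ (ojrel_L y p.1 p.2) _ hq).2⟩
    · obtain ⟨p, hp⟩ := hL.2 q
      exact ⟨p, (ih _ (ojrel_L y p.1 p.2) _ hp).2⟩
    · obtain ⟨q, hq⟩ := hR.1 p
      exact ⟨q, (ih _ (ojrel_R y p.1 p.2) _ hq).2⟩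
    · obtain ⟨p, hp⟩ := hR.2 q
      exact ⟨p, (ih _ (ojrel_R y p.1 p.2) _ hp).2⟩

end Associativity

open scoped PGame in
/-- associativity of the ordered join: for a family of games indexed by the
modular composition `R[Sᵢ]`, the games `(R[Sᵢ]) ⋈ G` and `R ⋈ (i ↦ Sᵢ ⋈ G|_{Sᵢ})` are
identical (have identical game trees). -/
theorem ojoin_mcomp {R : Type} [PartialOrder R] (S : R → Type) [∀ i, PartialOrder (S i)]
    (G : MComp R S → PGame) (h : Acc OJRel G) :
    ojoin G ≡ ojoin fun i : R => ojoin fun j : S i => G ⟨i, j⟩ :=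
  (IsBlockJoin.acc_and_ojoin_identical h _ fun _ => Identical.refl _).2
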